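/- If G is a pancyclic graph on n vertices consisting of a Hamiltonian cycle plus k chords, then n + k ≥ n + log₂(n−1) − 1; equivalently, 2^{k+1} − 1 ≥ n − 2. In particular m(n) ≥ n + log₂(n−1) − 1. -/

import Mathlib

open SimpleGraph

/-- `G` has a cycle of length `k`. -/
def HasCycleLength {V : Type*} (G : SimpleGraph V) (k : ℕ) : Prop :=
  ∃ (v : V) (w : G.Walk v v), w.IsCycle ∧ w.length = k

/-- A graph on a finite vertex type is pancyclic if it has a cycle of every
length `k` with `3 ≤ k ≤ n`, where `n` is the number of vertices. -/
def Pancyclic {V : Type*} [Fintype V] (G : SimpleGraph V) : Prop :=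
  ∀ k : ℕ, 3 ≤ k → k ≤ Fintype.card V → HasCycleLength G k

/-- `m n` is the minimum number of edges of a pancyclic graph on `n` vertices. -/
noncomputable def m (n : ℕ) : ℕ :=
  sInf {e | ∃ G : SimpleGraph (Fin n), Pancyclic G ∧ G.edgeSet.ncard = e}

/-- The set of cycles of `G`, each cycle identified with its edge set. -/
def cycleSets {V : Type*} (G : SimpleGraph V) : Set (Set (Sym2 V)) :=
  {s | ∃ (v : V) (w : G.Walk v v), w.IsCycle ∧ s = {e | e ∈ w.edges}}


/-!
Call a set of edges even if every vertex lies on an even number of its edges. Symmetric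
differences of even sets are even, and the edge set of a cycle is even. An even set of edges
of a path is empty: the start vertex would lie on exactly one of its edges unless the first
edge is missing, and then induct. Hence for a path `P` in `G` the map `D ↦ D \ E(P)` is
injective on even edge sets of `G`, so there are at most `2 ^ |E(G) \ E(P)|` of them. Deleting
one edge from a cycle with `k` chords gives such a path with `|E(G) \ E(P)| = k + 1`. A
pancyclic graph on `n` vertices has at least `n - 1` even edge sets: `∅` and one cycle of each
length `3, …, n`, distinct because their sizes are.
-/

open Finset
open scoped symmDiff

lemma Finset.card_symmDiff_add_two_mul_card_inter {α : Type*} [DecidableEq α] (s t : Finset α) :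
    #(s ∆ t) + 2 * #(s ∩ t) = #s + #t := by
  rw [Finset.symmDiff_def, card_union_of_disjoint disjoint_sdiff_sdiff,
    ← card_sdiff_add_card_inter s t, ← card_sdiff_add_card_inter t s, inter_comm t s]
  ring

section EvenEdgeSet

variable {V : Type*} [DecidableEq V]

def IsEvenEdgeSet (D : Finset (Sym2 V)) : Prop := ∀ x, Even #{e ∈ D | x ∈ e}

lemma isEvenEdgeSet_empty : IsEvenEdgeSet (∅ : Finset (Sym2 V)) := fun x => by simp

lemma IsEvenEdgeSet.symmDiff {D D' : Finset (Sym2 V)} (hD : IsEvenEdgeSet D)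
    (hD' : IsEvenEdgeSet D') : IsEvenEdgeSet (D ∆ D') := by
  intro x
  have h := card_symmDiff_add_two_mul_card_inter {e ∈ D | x ∈ e} {e ∈ D' | x ∈ e}
  have hfilter : {e ∈ D ∆ D' | x ∈ e} = {e ∈ D | x ∈ e} ∆ {e ∈ D' | x ∈ e} := by
    ext e; simp only [mem_filter, mem_symmDiff]; tauto
  have hsum := (hD x).add (hD' x)
  rw [hfilter]
  rw [← h] at hsum
  simpa [Nat.even_add] using hsum

end EvenEdgeSet

namespace SimpleGraph

variable {V : Type*} [DecidableEq V] {G : SimpleGraph V}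

lemma Walk.IsTrail.isEvenEdgeSet_edges {u : V} {c : G.Walk u u} (hc : c.IsTrail) :
    IsEvenEdgeSet c.edges.toFinset := fun x => by
  rw [hc.edges_nodup.card_eq_countP, hc.even_countP_edges_iff]
  exact fun h => absurd rfl h

lemma Walk.IsPath.eq_empty_of_subset_edges {u v : V} {p : G.Walk u v} (hp : p.IsPath)
    {D : Finset (Sym2 V)} (hD : D ⊆ p.edges.toFinset)
    (heven : ∀ x, x ≠ v → Even #{e ∈ D | x ∈ e}) : D = ∅ := by
  induction p with
  | nil => simpa using hD
  | @cons u w v h q ih =>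
    rw [cons_isPath_iff] at hp
    have hu : {e ∈ D | u ∈ e} ⊆ {s(u, w)} := by
      intro e he
      rw [mem_filter] at he
      have := hD he.1
      simp only [Walk.edges_cons, List.toFinset_cons, mem_insert, List.mem_toFinset] at this
      refine mem_singleton.mpr (this.resolve_right fun heq => hp.2 ?_)
      exact Walk.mem_support_of_mem_edges heq he.2
    have hfirst : s(u, w) ∉ D := by
      have huv : u ≠ v := fun huv => hp.2 (huv ▸ q.end_mem_support)
      have hcard : #{e ∈ D | u ∈ e} = 0 := by
        have hle := card_singleton s(u, w) ▸ card_le_card hu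
        obtain ⟨r, hr⟩ := heven u huv
        omega
      intro hmem
      rw [card_eq_zero, filter_eq_empty_iff] at hcard
      exact hcard hmem (Sym2.mem_mk_left u w)
    apply ih hp.1 _ heven
    intro e he
    have := hD he
    simp only [Walk.edges_cons, List.toFinset_cons, mem_insert] at this
    exact this.resolve_left (by rintro rfl; exact hfirst he)

lemma Walk.IsPath.injOn_sdiff_edges {u v : V} {p : G.Walk u v} (hp : p.IsPath) :
    Set.InjOn (· \ p.edges.toFinset) {D | IsEvenEdgeSet D} := by
  intro D hD D' hD' h
  rw [← symmDiff_eq_empty]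
  refine hp.eq_empty_of_subset_edges ?_ fun x _ => IsEvenEdgeSet.symmDiff hD hD' x
  intro e he
  by_contra hnot
  rw [mem_symmDiff] at he
  have h' := congrArg (e ∈ ·) h
  simp only [mem_sdiff, hnot, not_false_eq_true, and_true, eq_iff_iff] at h'
  tauto

lemma Walk.IsTrail.card_edgeFinset_sdiff_add_length [Fintype G.edgeSet] {u v : V}
    {p : G.Walk u v} (hp : p.IsTrail) :
    #(G.edgeFinset \ p.edges.toFinset) + p.length = #G.edgeFinset := by
  rw [← p.length_edges, ← List.toFinset_card_of_nodup hp.edges_nodup]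
  exact card_sdiff_add_card_eq_card fun e he =>
    mem_edgeFinset.mpr (p.edges_subset_edgeSet (List.mem_toFinset.mp he))

lemma HasCycleLength.exists_isEvenEdgeSet [Fintype G.edgeSet] {l : ℕ} (h : HasCycleLength G l) :
    ∃ D ⊆ G.edgeFinset, IsEvenEdgeSet D ∧ #D = l := by
  obtain ⟨u, c, hc, rfl⟩ := h
  refine ⟨c.edges.toFinset, fun e he => ?_, hc.isTrail.isEvenEdgeSet_edges, ?_⟩
  · exact mem_edgeFinset.mpr (c.edges_subset_edgeSet (List.mem_toFinset.mp he))
  · rw [List.toFinset_card_of_nodup hc.isTrail.edges_nodup, c.length_edges]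

variable [Fintype V] [Fintype G.edgeSet]

theorem Pancyclic.card_sub_one_le_two_pow (hG : Pancyclic G) {u v : V} {p : G.Walk u v}
    (hp : p.IsPath) : Fintype.card V - 1 ≤ 2 ^ #(G.edgeFinset \ p.edges.toFinset) := by
  have hE : ∀ l ∈ insert 0 (Icc 3 (Fintype.card V)),
      ∃ D ⊆ G.edgeFinset, IsEvenEdgeSet D ∧ #D = l := by
    intro l hl
    rcases mem_insert.mp hl with rfl | hl
    · exact ⟨∅, empty_subset _, isEvenEdgeSet_empty, card_empty⟩
    · rw [mem_Icc] at hl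
      exact (hG l hl.1 hl.2).exists_isEvenEdgeSet
  choose! E hEsub hEeven hEcard using hE
  calc Fintype.card V - 1 ≤ #(insert 0 (Icc 3 (Fintype.card V))) := by
        rw [card_insert_of_notMem (by simp), Nat.card_Icc]; omega
    _ ≤ #(G.edgeFinset \ p.edges.toFinset).powerset := by
        refine card_le_card_of_injOn (fun l => E l \ p.edges.toFinset) ?_ ?_
        · intro l hl
          exact mem_powerset.mpr (sdiff_subset_sdiff (hEsub l hl) le_rfl)
        · intro l hl l' hl' h
          rw [← hEcard l hl, ← hEcard l' hl', hp.injOn_sdiff_edges (hEeven l hl) (hEeven l' hl') h]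
    _ = 2 ^ #(G.edgeFinset \ p.edges.toFinset) := card_powerset _

theorem Pancyclic.card_sub_one_le_two_pow_of_isCycle (hG : Pancyclic G) {u : V}
    {c : G.Walk u u} (hc : c.IsCycle) :
    Fintype.card V - 1 ≤ 2 ^ (#(G.edgeFinset \ c.edges.toFinset) + 1) := by
  cases c with
  | nil => exact absurd rfl hc.ne_nil
  | cons h q =>
    obtain ⟨hq, hfirst⟩ := (Walk.cons_isCycle_iff q h).mp hc
    have hmem : s(u, _) ∈ G.edgeFinset \ q.edges.toFinset :=
      mem_sdiff.mpr ⟨mem_edgeFinset.mpr h, fun h' => hfirst (List.mem_toFinset.mp h')⟩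
    rw [Walk.edges_cons, List.toFinset_cons, sdiff_insert, card_erase_add_one hmem]
    exact hG.card_sub_one_le_two_pow hq

end SimpleGraph

lemma Real.logb_two_natCast_sub_one_le {n j : ℕ} (h : n - 1 ≤ 2 ^ j) :
    Real.logb 2 ((n : ℝ) - 1) ≤ j := by
  rcases Nat.lt_or_ge n 2 with hn | hn
  · interval_cases n <;> norm_num
  · have hpos : (0 : ℝ) < n - 1 := by
      have : (2 : ℝ) ≤ n := by exact_mod_cast hn
      linarith
    rw [Real.logb_le_iff_le_rpow one_lt_two hpos, Real.rpow_natCast]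
    exact_mod_cast (Nat.cast_sub (by omega : 1 ≤ n)).symm.trans_le (by exact_mod_cast h)

/-- Bondy's lower bound: if `G` is pancyclic on `n` vertices, consisting of a
Hamiltonian cycle plus `k` chords, then `2^(k+1) - 1 ≥ n - 2`, equivalently
`n + k ≥ n + log₂(n-1) - 1`; in particular `m n ≥ n + log₂(n-1) - 1`. -/
theorem stmt_5 {n k : ℕ} (G : SimpleGraph (Fin n))
    (v : Fin n) (w : G.Walk v v) (hw : w.IsHamiltonianCycle)
    (hk : (G.edgeSet \ {e | e ∈ w.edges}).ncard = k)
    (hG : Pancyclic G) :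
    n - 2 ≤ 2 ^ (k + 1) - 1 ∧
    (n : ℝ) + Real.logb 2 ((n : ℝ) - 1) - 1 ≤ (n : ℝ) + (k : ℝ) ∧
    (n : ℝ) + Real.logb 2 ((n : ℝ) - 1) - 1 ≤ (m n : ℝ) := by
  classical
  have hchords : #(G.edgeFinset \ w.edges.toFinset) = k := by
    rw [← hk, ← Set.ncard_coe_finset, coe_sdiff, coe_edgeFinset]
    simp
  have hbound := hG.card_sub_one_le_two_pow_of_isCycle hw.isCycle
  rw [Fintype.card_fin, hchords] at hbound
  have hlog {j : ℕ} (h : n - 1 ≤ 2 ^ (j + 1)) :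
      (n : ℝ) + Real.logb 2 ((n : ℝ) - 1) - 1 ≤ n + j := by
    have := Real.logb_two_natCast_sub_one_le h
    push_cast at this
    linarith
  refine ⟨by omega, hlog hbound, ?_⟩
  obtain ⟨H, hH, hm⟩ : m n ∈ {e | ∃ H : SimpleGraph (Fin n), Pancyclic H ∧ H.edgeSet.ncard = e} :=
    Nat.sInf_mem ⟨_, G, hG, rfl⟩
  have hn : 3 ≤ n := by simpa [hw.length_eq] using hw.isCycle.three_le_length
  obtain ⟨u, c, hc, hlen⟩ := hH n hn (by simp)
  have hbound' := hH.card_sub_one_le_two_pow_of_isCycle hc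
  rw [Fintype.card_fin] at hbound'
  rw [← hm, ← coe_edgeFinset, Set.ncard_coe_finset,
    ← hc.isTrail.card_edgeFinset_sdiff_add_length, hlen]
  push_cast
  linarith [hlog hbound']
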